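/- If f (p,q)-interlaces g, then the derivative f' (p,q)-interlaces the derivative g'. -/

import Mathlib

open Polynomial in
/-- The `i`-th element (1-indexed) of a list, as an `EReal`, with the convention
that it is `+∞` for `i < 1` and `-∞` past the end of the list. -/
noncomputable def seqOf (L : List ℝ) (i : ℤ) : EReal :=
  if i < 1 then ⊤ else (L[(i - 1).toNat]?).elim ⊥ (fun x => (x : EReal))

open Polynomial in
/-- `rSeq f i` is the `i`-th root of `f`, roots listed in non-increasing order,
with `r_i = +∞` for `i < 1` and `r_i = -∞` for `i` beyond the number of roots. -/
noncomputable def rSeq (f : Polynomial ℝ) (i : ℤ) : EReal :=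
  seqOf (f.roots.sort (· ≥ ·)) i

open Polynomial in
/-- `f` `(p,q)`-interlaces `g` : `r_{i+p}(g) ≤ r_i(f) ≤ r_{i-q}(g)` for all `i`. -/
def PQInt (p q : ℕ) (f g : Polynomial ℝ) : Prop :=
  ∀ i : ℤ, rSeq g (i + p) ≤ rSeq f i ∧ rSeq f i ≤ rSeq g (i - q)

open Polynomial in
/-- `f` is real-rooted with positive leading coefficient. -/
def RR (f : Polynomial ℝ) : Prop :=
  0 < f.leadingCoeff ∧ f.roots.card = f.natDegree

open Polynomial in
/-- number of roots of `f` (with multiplicity) in `[r, ∞)`. -/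
noncomputable def nRoots (f : Polynomial ℝ) (r : ℝ) : ℕ :=
  (f.roots.filter (fun x => r ≤ x)).card

/-- `i`-th largest eigenvalue of a Hermitian matrix, as an `EReal`,
with conventions `λ_i = +∞` for `i < 1` and `λ_i = -∞` for `i > n`. -/
noncomputable def eigSeq {m : Type*} [Fintype m] [DecidableEq m]
    {M : Matrix m m ℂ} (hM : M.IsHermitian) (i : ℤ) : EReal :=
  seqOf ((Finset.univ.val.map hM.eigenvalues).sort (· ≥ ·)) i

/-- positive index of inertia: number of positive eigenvalues. -/
noncomputable def posIdx {m : Type*} [Fintype m] [DecidableEq m]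
    {M : Matrix m m ℂ} (hM : M.IsHermitian) : ℕ :=
  (Finset.univ.filter (fun i => 0 < hM.eigenvalues i)).card

/-- negative index of inertia: number of negative eigenvalues. -/
noncomputable def negIdx {m : Type*} [Fintype m] [DecidableEq m]
    {M : Matrix m m ℂ} (hM : M.IsHermitian) : ℕ :=
  (Finset.univ.filter (fun i => hM.eigenvalues i < 0)).card

/-- characteristic polynomial of `M` equals the real polynomial `f` (coerced to `ℂ`). -/
def HasCharpoly {m : Type*} [Fintype m] [DecidableEq m]
    (M : Matrix m m ℂ) (f : Polynomial ℝ) : Prop :=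
  M.charpoly = f.map (algebraMap ℝ ℂ)


/-!
Write `N_h(t)` for the number of roots of `h` in `[t, ∞)`. Interlacing is equivalent to the two
counting inequalities `N_f ≤ N_g + q` and `N_g ≤ N_f + p`, so it suffices to show that
`N_f ≤ N_g + q` passes to the derivatives. By Rolle's theorem `N_{f'}(t) ≤ N_f(t)` and
`N_g(t) ≤ N_{g'}(t) + 1`, so a failure at `t` forces equality throughout. Then `f'` has a root `s`
in `[t, a)`, where `a` is the least root of `f` in `[t, ∞)`; moreover `a ≤ c` for the least root
`c` of `g` in `[t, ∞)`, and `g'` has no root in `[t, c)`. At `s` the logarithmic derivative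
`∑ 1 / (s - r)` over the roots of `f` vanishes, and pairing the `(i + q)`-th root of `f` with the
`i`-th root of `g` shows that the same sum over the roots of `g` is nonnegative, i.e.
`(g²)'(s) ≥ 0`. As `g²` drops to `0` at `c`, the mean value and intermediate value theorems give a
zero of `(g²)' = 2 g g'` in `[s, c)`, hence a root of `g'` there.
-/

open Polynomial

theorem List.Pairwise.apply_getElem_iff_lt_countP {α : Type*} [Preorder α] {L : List α}
    (hL : L.Pairwise (· ≥ ·)) {P : α → Prop} [DecidablePred P] (hP : IsUpperSet {x | P x})
    {i : ℕ} (hi : i < L.length) : P L[i] ↔ i < L.countP (P ·) := by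
  induction L generalizing i with
  | nil => simp at hi
  | cons x xs ih =>
    rw [List.pairwise_cons] at hL
    by_cases hx : P x
    · cases i with
      | zero => simp [hx]
      | succ j => simp [ih hL.2 (by simpa using hi), hx]
    · have hnot : ∀ y ∈ x :: xs, ¬ P y := by
        intro y hy hPy
        rcases List.mem_cons.1 hy with rfl | hy
        · exact hx hPy
        · exact hx (hP (hL.1 y hy) hPy)
      rw [List.countP_eq_zero.2 (by simpa using hnot)]
      simpa using hnot _ (List.getElem_mem hi)

theorem List.Pairwise.lt_getElem_iff_lt_countP {α : Type*} [LinearOrder α] {L : List α}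
    (hL : L.Pairwise (· ≥ ·)) (s : α) {i : ℕ} (hi : i < L.length) :
    s < L[i] ↔ i < L.countP (s < ·) :=
  hL.apply_getElem_iff_lt_countP (P := (s < ·)) (isUpperSet_Ioi s) hi

theorem List.Pairwise.getElem_le_getElem_of_countP_le {α : Type*} [LinearOrder α]
    {L M : List α} (hL : L.Pairwise (· ≥ ·)) (hM : M.Pairwise (· ≥ ·)) {q : ℕ}
    (h : ∀ t, L.countP (t ≤ ·) ≤ M.countP (t ≤ ·) + q)
    (i : ℕ) (hi : i + q < L.length) : ∃ hi' : i < M.length, L[i + q] ≤ M[i] := by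
  have hL_count := (hL.apply_getElem_iff_lt_countP (isUpperSet_Ici L[i + q]) hi).1 le_rfl
  have hM_count : i < M.countP (L[i + q] ≤ ·) := by
    have := h L[i + q]
    omega
  have hiM : i < M.length := hM_count.trans_le M.countP_le_length
  exact ⟨hiM, (hM.apply_getElem_iff_lt_countP (isUpperSet_Ici _) hiM).2 hM_count⟩

theorem List.sum_map_le_sum_map_of_shift {α M : Type*} [AddCommMonoid M] [PartialOrder M]
    [IsOrderedAddMonoid M] (φ : α → M) {A B : List α} {q : ℕ}
    (hhead : ∀ i (hi : i < A.length), i < q → φ A[i] ≤ 0)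
    (htail : ∀ j (hj : j < B.length), A.length - q ≤ j → 0 ≤ φ B[j])
    (hpair : ∀ i (hi : i + q < A.length), ∃ hi' : i < B.length, φ A[i + q] ≤ φ B[i]) :
    (A.map φ).sum ≤ (B.map φ).sum := by
  set m := A.length - q
  have hm : m ≤ B.length := by
    rcases Nat.eq_zero_or_pos m with h | h
    · omega
    · obtain ⟨hB, -⟩ := hpair (m - 1) (by omega)
      omega
  have hA_head : ((A.take q).map φ).sum ≤ 0 := by
    refine (List.sum_le_card_nsmul _ 0 fun x hx => ?_).trans_eq (smul_zero _)
    obtain ⟨a, ha, rfl⟩ := List.mem_map.1 hx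
    obtain ⟨i, hi, rfl⟩ := List.mem_take_iff_getElem.1 ha
    exact hhead i (by omega) (by omega)
  have hmid : ((A.drop q).map φ).sum ≤ ((B.take m).map φ).sum := by
    refine List.Forall₂.sum_le_sum (List.forall₂_iff_get.2 ⟨by simp [m, hm], fun i h₁ h₂ => ?_⟩)
    simp only [List.length_map, List.length_drop] at h₁
    obtain ⟨_, h⟩ := hpair i (by omega)
    simpa [add_comm q i] using h
  have hB_tail : 0 ≤ ((B.drop m).map φ).sum := by
    refine List.sum_nonneg fun x hx => ?_
    obtain ⟨b, hb, rfl⟩ := List.mem_map.1 hx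
    obtain ⟨j, hj, rfl⟩ := List.mem_drop_iff_getElem.1 hb
    exact htail _ _ (by omega)
  calc (A.map φ).sum = ((A.take q).map φ).sum + ((A.drop q).map φ).sum := by
        rw [← List.sum_append, ← List.map_append, List.take_append_drop]
    _ ≤ 0 + ((B.take m).map φ).sum := add_le_add hA_head hmid
    _ ≤ ((B.take m).map φ).sum + ((B.drop m).map φ).sum := by
        rw [zero_add]
        exact le_add_of_nonneg_right hB_tail
    _ = (B.map φ).sum := by rw [← List.sum_append, ← List.map_append, List.take_append_drop]

theorem coe_le_seqOf_iff {L : List ℝ} (hL : L.Pairwise (· ≥ ·)) (t : ℝ) (i : ℤ) :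
    (t : EReal) ≤ seqOf L i ↔ i ≤ L.countP (t ≤ ·) := by
  rw [seqOf]
  split_ifs with hi
  · simp only [le_top, true_iff]
    omega
  obtain ⟨j, rfl⟩ : ∃ j : ℕ, i = j + 1 := ⟨(i - 1).toNat, by omega⟩
  rw [show (j + 1 - 1 : ℤ).toNat = j by omega]
  by_cases hjL : j < L.length
  · rw [List.getElem?_eq_getElem hjL, Option.elim, EReal.coe_le_coe_iff,
      hL.apply_getElem_iff_lt_countP (P := (t ≤ ·)) (isUpperSet_Ici t) hjL]
    omega
  · rw [List.getElem?_eq_none (by omega), Option.elim]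
    have := L.countP_le_length (p := (t ≤ ·))
    simp only [EReal.coe_ne_bot, le_bot_iff, false_iff]
    omega

theorem coe_le_rSeq_iff (f : ℝ[X]) (t : ℝ) (i : ℤ) :
    (t : EReal) ≤ rSeq f i ↔ i ≤ nRoots f t := by
  rw [rSeq, coe_le_seqOf_iff (Multiset.pairwise_sort _ _), nRoots,
    ← Multiset.countP_eq_card_filter, ← Multiset.coe_countP, Multiset.sort_eq]

theorem rSeq_le_rSeq_sub_iff (f g : ℝ[X]) (q : ℕ) :
    (∀ i : ℤ, rSeq f i ≤ rSeq g (i - q)) ↔ ∀ t : ℝ, nRoots f t ≤ nRoots g t + q := by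
  constructor
  · intro h t
    have := (coe_le_rSeq_iff g t _).1
      (((coe_le_rSeq_iff f t _).2 le_rfl).trans (h (nRoots f t)))
    omega
  · intro h i
    refine EReal.ge_of_forall_gt_iff_ge.1 fun t ht => ?_
    have := (coe_le_rSeq_iff f t i).1 ht.le
    rw [coe_le_rSeq_iff]
    have := h t
    omega

theorem pqInt_iff_nRoots (p q : ℕ) (f g : ℝ[X]) :
    PQInt p q f g ↔
      (∀ t, nRoots f t ≤ nRoots g t + q) ∧ ∀ t, nRoots g t ≤ nRoots f t + p := by
  rw [← rSeq_le_rSeq_sub_iff, ← rSeq_le_rSeq_sub_iff, PQInt, forall_and, and_comm]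
  exact and_congr Iff.rfl
    ⟨fun h i => by simpa using h (i - p), fun h i => by simpa using h (i + p)⟩

theorem Multiset.card_le_card_add_one_of_count_le {α : Type*} [DecidableEq α]
    {A B : Multiset α} (hcount : ∀ x ∈ A, A.count x ≤ B.count x + 1)
    (hsupp : A.toFinset.card ≤ (B.toFinset \ A.toFinset).card + 1) :
    card A ≤ card B + 1 := by
  have hsdiff : (B.toFinset \ A.toFinset).card ≤ ∑ x ∈ B.toFinset \ A.toFinset, B.count x := by
    rw [Finset.card_eq_sum_ones]
    gcongr with x hx
    exact Multiset.count_pos.2 (Multiset.mem_toFinset.1 (Finset.mem_sdiff.1 hx).1)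
  calc card A = ∑ x ∈ A.toFinset, A.count x := (Multiset.toFinset_sum_count_eq A).symm
    _ ≤ ∑ x ∈ A.toFinset, (B.count x + 1) :=
      Finset.sum_le_sum fun x hx => hcount x (Multiset.mem_toFinset.1 hx)
    _ ≤ ∑ x ∈ A.toFinset, B.count x + ((∑ x ∈ B.toFinset \ A.toFinset, B.count x) + 1) := by
      rw [Finset.sum_add_distrib, ← Finset.card_eq_sum_ones]
      omega
    _ = ∑ x ∈ A.toFinset ∪ B.toFinset, B.count x + 1 := by
      rw [← Finset.union_sdiff_self_eq_union, Finset.sum_union Finset.disjoint_sdiff, add_assoc]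
    _ = card B + 1 := by
      rw [← Finset.sum_subset Finset.subset_union_right, Multiset.toFinset_sum_count_eq]
      intro x _ hx
      exact Multiset.count_eq_zero.2 (by simpa using hx)

theorem Multiset.card_filter_le_eq_count_add {α : Type*} [LinearOrder α] (m : Multiset α)
    (a : α) : (m.filter (a ≤ ·)).card = m.count a + (m.filter (a < ·)).card := by
  have hempty : m.filter (fun x => a = x ∧ a < x) = 0 :=
    Multiset.filter_eq_nil.2 fun x _ h => h.2.ne h.1
  rw [Multiset.count_eq_card_filter_eq, ← Multiset.card_add, Multiset.filter_add_filter, hempty,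
    add_zero]
  exact congrArg card (Multiset.filter_congr fun x _ => le_iff_eq_or_lt)

theorem Multiset.sum_map_inv_sub_le {A B : Multiset ℝ} {q : ℕ} {s : ℝ} (hA : s ∉ A)
    (hB : s ∉ B) (hAB : ∀ t, (A.filter (t ≤ ·)).card ≤ (B.filter (t ≤ ·)).card + q)
    (hs : (A.filter (s < ·)).card = (B.filter (s < ·)).card + q) :
    (A.map fun r => (s - r)⁻¹).sum ≤ (B.map fun r => (s - r)⁻¹).sum := by
  obtain ⟨LA, hLA, rfl⟩ : ∃ L : List ℝ, L.Pairwise (· ≥ ·) ∧ (L : Multiset ℝ) = A :=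
    ⟨_, Multiset.pairwise_sort _ _, Multiset.sort_eq _ _⟩
  obtain ⟨LB, hLB, rfl⟩ : ∃ L : List ℝ, L.Pairwise (· ≥ ·) ∧ (L : Multiset ℝ) = B :=
    ⟨_, Multiset.pairwise_sort _ _, Multiset.sort_eq _ _⟩
  simp only [← Multiset.countP_eq_card_filter, Multiset.coe_countP] at hAB hs
  simp only [Multiset.mem_coe] at hA hB
  simp only [Multiset.map_coe, Multiset.sum_coe]
  have hsA : LA.countP (s < ·) ≤ LA.length := LA.countP_le_length
  have hLB_lt {j : ℕ} (hj : j < LB.length) (hjs : LB.countP (s < ·) ≤ j) : LB[j] < s :=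
    lt_of_le_of_ne (not_lt.1 fun h => by have := (hLB.lt_getElem_iff_lt_countP s hj).1 h; omega)
      fun h => hB (h ▸ List.getElem_mem hj)
  refine List.sum_map_le_sum_map_of_shift _ (q := q) (fun i hi hiq => ?_)
    (fun j hj hjm => inv_nonneg.2 (sub_nonneg.2 (hLB_lt hj (by omega)).le)) (fun i hi => ?_)
  · have := (hLA.lt_getElem_iff_lt_countP s hi).2 (by omega)
    exact inv_nonpos.2 (by linarith)
  obtain ⟨hi', hle⟩ := hLA.getElem_le_getElem_of_countP_le hLB hAB i hi
  refine ⟨hi', ?_⟩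
  by_cases hiB : i < LB.countP (s < ·)
  · have hA_gt := (hLA.lt_getElem_iff_lt_countP s hi).2 (by omega)
    exact (inv_le_inv_of_neg (by linarith) (by linarith)).2 (by linarith)
  · exact inv_anti₀ (by linarith [hLB_lt hi' (not_lt.1 hiB)]) (by linarith)

namespace Polynomial

theorem card_roots_filter_le_derivative (p : ℝ[X]) (P : ℝ → Prop) [DecidablePred P]
    (hP : {x | P x}.OrdConnected) :
    (p.roots.filter P).card ≤ ((derivative p).roots.filter P).card + 1 := by
  classical
  apply Multiset.card_le_card_add_one_of_count_le
  · intro x hx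
    rw [Multiset.count_filter_of_pos (Multiset.of_mem_filter hx),
      Multiset.count_filter_of_pos (Multiset.of_mem_filter hx), count_roots, count_roots]
    have := p.rootMultiplicity_sub_one_le_derivative_rootMultiplicity x
    omega
  rcases eq_or_ne (derivative p) 0 with hp' | hp'
  · rw [eq_C_of_derivative_eq_zero hp']
    simp
  have hp : p ≠ 0 := ne_of_apply_ne derivative (by rwa [derivative_zero])
  refine Finset.card_le_sdiff_of_interleaved fun x hx y hy hxy _ => ?_
  simp only [Multiset.mem_toFinset, Multiset.mem_filter, mem_roots hp] at hx hy
  obtain ⟨z, hz, hz'⟩ := exists_deriv_eq_zero hxy p.continuousOn (hx.1.trans hy.1.symm)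
  refine ⟨z, ?_, hz⟩
  simp only [Multiset.mem_toFinset, Multiset.mem_filter, mem_roots hp']
  exact ⟨by rwa [IsRoot, ← p.deriv], hP.out hx.2 hy.2 (Set.Ioo_subset_Icc_self hz)⟩

theorem nRoots_le_nRoots_derivative_add_one (p : ℝ[X]) (t : ℝ) :
    nRoots p t ≤ nRoots (derivative p) t + 1 :=
  card_roots_filter_le_derivative p _ Set.ordConnected_Ici

theorem nRoots_eq_nRoots_add_card_filter_Ico (p : ℝ[X]) {t c : ℝ} (htc : t ≤ c) :
    nRoots p t = nRoots p c + (p.roots.filter (· ∈ Set.Ico t c)).card := by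
  have hempty : p.roots.filter (fun x => c ≤ x ∧ x ∈ Set.Ico t c) = 0 :=
    Multiset.filter_eq_nil.2 fun x _ h => h.2.2.not_ge h.1
  rw [nRoots, nRoots, ← Multiset.card_add, Multiset.filter_add_filter, hempty, add_zero]
  refine congrArg Multiset.card (Multiset.filter_congr fun x _ => ⟨fun h => ?_, ?_⟩)
  · exact (le_or_gt c x).imp id fun h' => ⟨h, h'⟩
  · rintro (h | h)
    exacts [htc.trans h, h.1]

theorem exists_least_root_ge {p : ℝ[X]} {t : ℝ} (h : 0 < nRoots p t) :
    ∃ c ∈ p.roots, t ≤ c ∧ ∀ x ∈ Set.Ico t c, x ∉ p.roots := by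
  set S := (p.roots.filter (t ≤ ·)).toFinset
  have hS : S.Nonempty := by
    obtain ⟨x, hx⟩ := Multiset.card_pos_iff_exists_mem.1 h
    exact ⟨x, Multiset.mem_toFinset.2 hx⟩
  have hmin := Multiset.mem_filter.1 (Multiset.mem_toFinset.1 (S.min'_mem hS))
  refine ⟨S.min' hS, hmin.1, hmin.2, fun x hx hxp => ?_⟩
  exact hx.2.not_ge (S.min'_le x (Multiset.mem_toFinset.2 (Multiset.mem_filter.2 ⟨hxp, hx.1⟩)))

theorem card_roots_filter_Ico_eq_zero {p : ℝ[X]} {t c : ℝ}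
    (hfree : ∀ x ∈ Set.Ico t c, x ∉ p.roots) : (p.roots.filter (· ∈ Set.Ico t c)).card = 0 :=
  Multiset.card_eq_zero.2 (Multiset.filter_eq_nil.2 fun x hx hx' => hfree x hx' hx)

theorem exists_root_of_nRoots_eq_nRoots_derivative_add_one {p : ℝ[X]} {t : ℝ}
    (h : nRoots p t = nRoots (derivative p) t + 1) :
    ∃ c ∈ p.roots, t ≤ c ∧ ∀ x ∈ Set.Ico t c, x ∉ p.roots ∧ x ∉ (derivative p).roots := by
  obtain ⟨c, hc, htc, hfree⟩ := exists_least_root_ge (p := p) (t := t) (by omega)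
  refine ⟨c, hc, htc, fun x hx => ⟨hfree x hx, fun hx' => ?_⟩⟩
  have hp_eq := nRoots_eq_nRoots_add_card_filter_Ico p htc
  have hp'_eq := nRoots_eq_nRoots_add_card_filter_Ico (derivative p) htc
  have hp'_Ico : 0 < ((derivative p).roots.filter (· ∈ Set.Ico t c)).card :=
    Multiset.card_pos_iff_exists_mem.2 ⟨x, Multiset.mem_filter.2 ⟨hx', hx⟩⟩
  have := card_roots_filter_Ico_eq_zero hfree
  have := nRoots_le_nRoots_derivative_add_one p c
  omega

theorem Splits.eval_derivative_eq_mul_sum_inv {K : Type*} [Field K] {p : K[X]} (hp : p.Splits)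
    {x : K} (hx : ¬ p.IsRoot x) :
    (derivative p).eval x = p.eval x * (p.roots.map fun r => (x - r)⁻¹).sum := by
  classical
  rw [hp.eval_derivative, hp.eval_eq_prod_roots, mul_assoc,
    ← Multiset.sum_map_mul_left (a := (p.roots.map (x - ·)).prod)]
  congr 2
  refine Multiset.map_congr rfl fun r hr => ?_
  have hxr : x - r ≠ 0 := sub_ne_zero.2 fun h => hx (h ▸ isRoot_of_mem_roots hr)
  rw [← Multiset.prod_map_erase (f := (x - ·)) hr]
  field_simp

theorem exists_mem_Ico_isRoot_derivative_of_eval_le (p : ℝ[X]) {s c : ℝ} (hsc : s < c)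
    (hp : p.eval c ≤ p.eval s) (hs : 0 ≤ (derivative p).eval s) :
    ∃ x ∈ Set.Ico s c, (derivative p).IsRoot x := by
  obtain ⟨ξ, hξ, hslope⟩ := exists_deriv_eq_slope (fun x => p.eval x) hsc p.continuousOn
    p.differentiableOn
  rw [p.deriv] at hslope
  have hξ_nonpos : (derivative p).eval ξ ≤ 0 :=
    hslope ▸ div_nonpos_of_nonpos_of_nonneg (sub_nonpos.2 hp) (sub_pos.2 hsc).le
  obtain ⟨x, hx, hx0⟩ :=
    intermediate_value_Icc' hξ.1.le (derivative p).continuousOn ⟨hξ_nonpos, hs⟩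
  exact ⟨x, ⟨hx.1, hx.2.trans_lt hξ.2⟩, hx0⟩

section Splits

variable {p : ℝ[X]}

theorem Splits.card_roots_derivative (hp : p.Splits) :
    (derivative p).roots.card = p.roots.card - 1 := by
  have := (derivative p).card_roots'
  have := natDegree_derivative_le p
  have := card_roots_le_derivative p
  have := hp.natDegree_eq_card_roots
  omega

theorem Splits.card_roots_derivative_filter_le (hp : p.Splits) (P : ℝ → Prop)
    [DecidablePred P] (hP : {x | ¬ P x}.OrdConnected) :
    ((derivative p).roots.filter P).card ≤ (p.roots.filter P).card := by
  have hrolle := card_roots_filter_le_derivative p _ hP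
  have hsplit := congrArg Multiset.card (Multiset.filter_add_not P p.roots)
  have hsplit' := congrArg Multiset.card (Multiset.filter_add_not P (derivative p).roots)
  rw [Multiset.card_add] at hsplit hsplit'
  have := hp.card_roots_derivative
  omega

theorem Splits.nRoots_derivative_le (hp : p.Splits) (t : ℝ) :
    nRoots (derivative p) t ≤ nRoots p t :=
  hp.card_roots_derivative_filter_le _ (by simp_rw [not_le]; exact Set.ordConnected_Iio)

theorem Splits.nRoots_derivative_add_one_le_of_mem_roots (hp : p.Splits) {a : ℝ}
    (ha : a ∈ p.roots) : nRoots (derivative p) a + 1 ≤ nRoots p a := by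
  have hcount : (derivative p).roots.count a + 1 = p.roots.count a := by
    have := Multiset.count_pos.2 ha
    rw [count_roots] at this ⊢
    rw [count_roots, derivative_rootMultiplicity_of_root (isRoot_of_mem_roots ha)]
    omega
  have := hp.card_roots_derivative_filter_le (a < ·)
    (by simp_rw [not_lt]; exact Set.ordConnected_Iic)
  rw [nRoots, nRoots, Multiset.card_filter_le_eq_count_add,
    Multiset.card_filter_le_eq_count_add]
  omega

theorem Splits.exists_root_derivative_Ico_of_nRoots_derivative_eq (hp : p.Splits) {t : ℝ}
    (h : nRoots (derivative p) t = nRoots p t) (h0 : 0 < nRoots p t) :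
    ∃ a ∈ p.roots, t ≤ a ∧ (∀ x ∈ Set.Ico t a, x ∉ p.roots) ∧
      ∃ s ∈ (derivative p).roots, s ∈ Set.Ico t a := by
  obtain ⟨a, ha, hta, hfree⟩ := exists_least_root_ge h0
  refine ⟨a, ha, hta, hfree, ?_⟩
  have hp_eq := nRoots_eq_nRoots_add_card_filter_Ico p hta
  have hp'_eq := nRoots_eq_nRoots_add_card_filter_Ico (derivative p) hta
  have := card_roots_filter_Ico_eq_zero hfree
  have := hp.nRoots_derivative_add_one_le_of_mem_roots ha
  obtain ⟨s, hs⟩ := Multiset.card_pos_iff_exists_mem.1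
    (show 0 < ((derivative p).roots.filter (· ∈ Set.Ico t a)).card by omega)
  exact ⟨s, Multiset.mem_filter.1 hs⟩

end Splits

variable {f g : ℝ[X]} {q : ℕ}

theorem Splits.exists_mem_Ico_isRoot_derivative (hf : f.Splits) (hg : g.Splits)
    (hfg : ∀ t, nRoots f t ≤ nRoots g t + q) {s c : ℝ} (hs : (derivative f).IsRoot s)
    (hsf : ¬ f.IsRoot s) (hc : c ∈ g.roots) (hsc : s < c)
    (hfree : ∀ x ∈ Set.Ico s c, x ∉ g.roots)
    (hcount : (f.roots.filter (s < ·)).card = (g.roots.filter (s < ·)).card + q) :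
    ∃ x ∈ Set.Ico s c, (derivative g).IsRoot x := by
  have hg0 : g ≠ 0 := ne_zero_of_mem_roots hc
  have hg_ne {x : ℝ} (hx : x ∈ Set.Ico s c) : ¬ g.IsRoot x :=
    fun h => hfree x hx ((mem_roots hg0).2 h)
  have hsg : ¬ g.IsRoot s := hg_ne ⟨le_rfl, hsc⟩
  have hsum_f : (f.roots.map fun r => (s - r)⁻¹).sum = 0 := by
    have := hf.eval_derivative_eq_mul_sum_inv hsf
    rw [hs.eq_zero, zero_eq_mul] at this
    exact this.resolve_left hsf
  have hsum_g : 0 ≤ (g.roots.map fun r => (s - r)⁻¹).sum :=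
    hsum_f ▸ Multiset.sum_map_inv_sub_le (fun h => hsf (isRoot_of_mem_roots h))
      (fun h => hsg (isRoot_of_mem_roots h)) hfg hcount
  have hgg_s : 0 ≤ (derivative (g * g)).eval s := by
    rw [derivative_mul, eval_add, eval_mul, eval_mul, hg.eval_derivative_eq_mul_sum_inv hsg]
    nlinarith [sq_nonneg (g.eval s)]
  obtain ⟨x, hx, hx0⟩ := exists_mem_Ico_isRoot_derivative_of_eval_le (g * g) hsc
    (by simp [(isRoot_of_mem_roots hc).eq_zero, mul_self_nonneg]) hgg_s
  rw [IsRoot, derivative_mul, eval_add, eval_mul, eval_mul, mul_comm, ← two_mul] at hx0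
  have : g.eval x = 0 ∨ (derivative g).eval x = 0 := by simpa using hx0
  exact ⟨x, hx, this.resolve_left (hg_ne hx)⟩

theorem Splits.nRoots_derivative_le_add (hf : f.Splits) (hg : g.Splits)
    (hfg : ∀ t, nRoots f t ≤ nRoots g t + q) (t : ℝ) :
    nRoots (derivative f) t ≤ nRoots (derivative g) t + q := by
  by_contra! hlt
  have hf_rolle := hf.nRoots_derivative_le t
  have hg_rolle := nRoots_le_nRoots_derivative_add_one g t
  have hft := hfg t
  obtain ⟨c, hc, htc, hc_free⟩ :=
    exists_root_of_nRoots_eq_nRoots_derivative_add_one (p := g) (t := t) (by omega)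
  obtain ⟨a, ha, hta, ha_free, s, hs, hts, hsa⟩ :=
    hf.exists_root_derivative_Ico_of_nRoots_derivative_eq (t := t) (by omega) (by omega)
  have hac : a ≤ c := by
    by_contra! hca
    have := nRoots_eq_nRoots_add_card_filter_Ico f hta
    have := nRoots_eq_nRoots_add_card_filter_Ico g hta
    have := card_roots_filter_Ico_eq_zero ha_free
    have : 0 < (g.roots.filter (· ∈ Set.Ico t a)).card :=
      Multiset.card_pos_iff_exists_mem.2 ⟨c, Multiset.mem_filter.2 ⟨hc, htc, hca⟩⟩
    have := hfg a
    omega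
  have hcount_gt {p : ℝ[X]} {b : ℝ} (hsb : s < b) (hfree : ∀ x ∈ Set.Ico t b, x ∉ p.roots) :
      (p.roots.filter (s < ·)).card = nRoots p t :=
    congrArg Multiset.card <| Multiset.filter_congr fun x hx =>
      ⟨fun h => hts.trans h.le, fun h => hsb.trans_le (not_lt.1 fun hxb => hfree x ⟨h, hxb⟩ hx)⟩
  have hsc : s < c := hsa.trans_le hac
  obtain ⟨x, hx, hx'⟩ := hf.exists_mem_Ico_isRoot_derivative hg hfg (isRoot_of_mem_roots hs)
    (fun h => ha_free s ⟨hts, hsa⟩ ((mem_roots (ne_zero_of_mem_roots ha)).2 h)) hc hsc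
    (fun x hx => (hc_free x ⟨hts.trans hx.1, hx.2⟩).1)
    (by rw [hcount_gt hsa ha_free, hcount_gt hsc fun x hx => (hc_free x hx).1]; omega)
  have hg'0 : derivative g ≠ 0 := fun h => by
    rw [eq_C_of_derivative_eq_zero h, roots_C] at hc
    exact Multiset.notMem_zero c hc
  exact (hc_free x ⟨hts.trans hx.1, hx.2⟩).2 ((mem_roots hg'0).2 hx')

end Polynomial

theorem stmt6 (f g : Polynomial ℝ) (hf : RR f) (hg : RR g) (p q : ℕ)
    (h : PQInt p q f g) :
    PQInt p q (Polynomial.derivative f) (Polynomial.derivative g) := by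
  have hf_splits : f.Splits := splits_iff_card_roots.2 hf.2
  have hg_splits : g.Splits := splits_iff_card_roots.2 hg.2
  rw [pqInt_iff_nRoots] at h ⊢
  exact ⟨hf_splits.nRoots_derivative_le_add hg_splits h.1,
    hg_splits.nRoots_derivative_le_add hf_splits h.2⟩
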